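/- Let Λ be a finite commutative group, l an antisymmetric pairing on Λ, Δ a maximal isotropic subgroup, and s : Λ → GL(n,ℂ) a map such that: s(1) = 1; s(λλ')⁻¹·s(λ)·s(λ') is a scalar matrix for all λ,λ'; s(λ)·s(λ')·s(λ)⁻¹·s(λ')⁻¹ = l(λ)(λ')·1 for all λ,λ'; the restriction of s to Δ is a group homomorphism into diagonal matrices; and each s(λ) maps every weight space of the family {s(δ)}_{δ∈Δ} onto a weight space, with all nonzero blocks of s(λ) (in the coordinate block decomposition by weight spaces) equal to scalar multiples of identity matrices. Let Ŝ ⊆ Hom(Δ,ℂˣ) be the set of weights, i.e. characters χ for which the weight space W_χ := {v ∈ ℂⁿ : s(δ)v = χ(δ)v for all δ ∈ Δ} is nonzero. Define GL(n,ℂ)_θ := {A ∈ GL(n,ℂ) : A⁻¹·s(λ)·A·s(λ)⁻¹ is a scalar matrix for every λ ∈ Λ} and c_θ : GL(n,ℂ)_θ → Hom(Λ,ℂˣ) by c_θ(A)(λ)·1 := A⁻¹·s(λ)·A·s(λ)⁻¹. Then the image of c_θ equals the set of all γ ∈ Hom(Λ,ℂˣ) such that for every χ ∈ Ŝ the character χ·(γ|_Δ)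 again lies in Ŝ and dim W_{χ·(γ|_Δ)} = dim W_χ. -/

import Mathlib

/-- An antisymmetric pairing on a commutative group `Λ` is a homomorphism
`l : Λ → Λ* = Hom(Λ, ℂˣ)` with `l x x = 1` for all `x`. -/
def IsAntisymPairing {Λ : Type*} [CommGroup Λ] (l : Λ →* (Λ →* ℂˣ)) : Prop :=
  ∀ x : Λ, l x x = 1

/-- A subgroup `Δ ≤ Λ` is isotropic for `l` if `l` pairs any two of its elements trivially. -/
def IsIsotropic {Λ : Type*} [CommGroup Λ] (l : Λ →* (Λ →* ℂˣ)) (Δ : Subgroup Λ) : Prop :=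
  ∀ x ∈ Δ, ∀ y ∈ Δ, l x y = 1

/-- A subgroup is maximal isotropic if it is isotropic and not properly contained in any
isotropic subgroup. -/
def IsMaxIsotropic {Λ : Type*} [CommGroup Λ] (l : Λ →* (Λ →* ℂˣ)) (Δ : Subgroup Λ) : Prop :=
  IsIsotropic l Δ ∧ ∀ Δ' : Subgroup Λ, IsIsotropic l Δ' → Δ ≤ Δ' → Δ' = Δ

/-- `M` is a permutation matrix whose nonzero blocks (with respect to the partition of the
coordinates into classes of the relation `R`) are scalar multiples of identity matrices. -/
def IsBlockScalarPerm {n : ℕ} (R : Fin n → Fin n → Prop)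
    (M : Matrix (Fin n) (Fin n) ℂ) : Prop :=
  ∃ σ : Equiv.Perm (Fin n),
    (∀ i j : Fin n, i ≠ σ j → M i j = 0) ∧
    (∀ j : Fin n, M (σ j) j ≠ 0) ∧
    (∀ j j' : Fin n, R j j' → R (σ j) (σ j')) ∧
    (∀ j j' : Fin n, R j j' → M (σ j) j = M (σ j') j') ∧
    (∀ j j' : Fin n, R j j' → j ≤ j' → σ j ≤ σ j')

/-- The weight space `W_χ = {v ∈ ℂⁿ : s(δ) v = χ(δ) v for all δ ∈ Δ}` of a character
`χ : Δ → ℂˣ` for the family `{s(δ)}_{δ∈Δ}`. -/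
noncomputable def weightSpace {Λ : Type*} [CommGroup Λ] {n : ℕ} (Δ : Subgroup Λ)
    (s : Λ → (Matrix (Fin n) (Fin n) ℂ)ˣ) (χ : Δ →* ℂˣ) : Submodule ℂ (Fin n → ℂ) :=
  ⨅ d : Δ, Module.End.eigenspace
    (Matrix.mulVecLin ((s (d : Λ) : Matrix (Fin n) (Fin n) ℂ))) ((χ d : ℂ))

/-!
If `A` lies in the image of `c_θ`, then `s(δ) A = γ(δ) A s(δ)` for `δ ∈ Δ`, so `A` maps `W_χ`
isomorphically onto `W_{χ·γ|_Δ}`.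

Conversely, each `s(λ)` is a monomial matrix, with permutation `σ_λ` and nonzero entries `c_λ`;
projectivity makes `λ ↦ σ_λ` a homomorphism, and the commutation relation says that `σ_λ` shifts
the weight `D j` of the basis vector `e_j` by `l(·, λ)|_Δ`. The dimension condition yields a
permutation `τ` shifting every weight by `γ|_Δ`; choosing `τ` increasing on each weight class
forces it to commute with every `σ_λ`, since these are increasing on weight classes too and an
increasing bijection between finite chains is unique. We look for `A` monomial with permutation
`τ` and entries `ε`: the condition `s(λ) A = γ(λ) A s(λ)` asks `ε` to trivialise a 1-cocycle of
`λ ↦ σ_λ`. A cocycle is a coboundary as soon as it vanishes on stabilisers, and here a stabiliser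
of a coordinate pairs trivially with `Δ`, hence lies in `Δ` by maximality, where the cocycle
vanishes because `D (τ j) = D j · γ|_Δ`.
-/

open Function Set Matrix

section FiberPerm

variable {X Y : Type*} {f : X → Y} {φ : Y → Y}

theorem Equiv.Perm.mapsTo_fiber {ρ : Equiv.Perm X} (hρ : ∀ x, f (ρ x) = φ (f x)) (y : Y) :
    MapsTo ρ (f ⁻¹' {y}) (f ⁻¹' {φ y}) := by
  rintro x (rfl : f x = y)
  exact hρ x

theorem Equiv.Perm.surjOn_fiber (hφ : Injective φ) {ρ : Equiv.Perm X}
    (hρ : ∀ x, f (ρ x) = φ (f x)) (y : Y) : SurjOn ρ (f ⁻¹' {y}) (f ⁻¹' {φ y}) := by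
  rintro z (hz : f z = φ y)
  refine ⟨ρ.symm z, hφ ?_, ρ.apply_symm_apply z⟩
  rw [← hρ, ρ.apply_symm_apply, hz]

variable [LinearOrder X]

theorem Equiv.Perm.eq_of_map_fiber_of_strictMonoOn [Finite X] (hφ : Injective φ)
    {ρ ρ' : Equiv.Perm X} (hρ : ∀ x, f (ρ x) = φ (f x)) (hρ' : ∀ x, f (ρ' x) = φ (f x))
    (hm : ∀ y, StrictMonoOn ρ (f ⁻¹' {y})) (hm' : ∀ y, StrictMonoOn ρ' (f ⁻¹' {y})) :
    ρ = ρ' := by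
  ext x
  -- both restrict to strictly monotone bijections from the fibre of `f x` onto that of
  -- `φ (f x)`, and a well-order admits at most one such map onto a given range
  have h := Equiv.Perm.mapsTo_fiber hρ (f x)
  have h' := Equiv.Perm.mapsTo_fiber hρ' (f x)
  have hrange : range (h.restrict _ _ _) = range (h'.restrict _ _ _) := by
    rw [h.range_restrict, h'.range_restrict, (surjOn_fiber hφ hρ _).image_eq_of_mapsTo h,
      (surjOn_fiber hφ hρ' _).image_eq_of_mapsTo h']
  have hmono : ∀ {ρ : Equiv.Perm X} (h : MapsTo ρ (f ⁻¹' {f x}) (f ⁻¹' {φ (f x)})),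
      StrictMonoOn ρ (f ⁻¹' {f x}) → StrictMono (h.restrict _ _ _) :=
    fun _ hm p q hpq => hm p.2 q.2 hpq
  have := ((hmono h (hm _)).range_inj (hmono h' (hm' _))).mp hrange
  exact congrArg Subtype.val (congrFun this ⟨x, rfl⟩)

theorem exists_perm_map_fiber_strictMonoOn [Finite X] (hφ : Injective φ)
    (hcard : ∀ x, Nat.card {x' // f x' = φ (f x)} = Nat.card {x' // f x' = f x}) :
    ∃ τ : Equiv.Perm X, (∀ x, f (τ x) = φ (f x)) ∧ ∀ y, StrictMonoOn τ (f ⁻¹' {y}) := by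
  classical
  have := Fintype.ofFinite X
  simp only [Nat.card_eq_fintype_card] at hcard
  let e (y : Y) (h : Fintype.card {x' // f x' = φ y} = Fintype.card {x' // f x' = y}) :
      {x' // f x' = y} ≃o {x' // f x' = φ y} :=
    (Fintype.orderIsoFinOfCardEq _ rfl).symm.trans (Fintype.orderIsoFinOfCardEq _ h)
  let τ (x : X) : X := e (f x) (hcard x) ⟨x, rfl⟩
  have τ_eq : ∀ y hy x (hx : f x = y), τ x = e y hy ⟨x, hx⟩ := by
    rintro _ _ x rfl
    rfl
  have hτ : ∀ x, f (τ x) = φ (f x) := fun x => (e _ _ _).2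
  have hmono : ∀ y, StrictMonoOn τ (f ⁻¹' {y}) := by
    rintro _ x rfl x' (hx' : f x' = f x) hlt
    rw [τ_eq _ (hcard x) x rfl, τ_eq _ (hcard x) x' hx']
    exact (e _ _).strictMono hlt
  have hinj : Injective τ := fun x x' hxx' =>
    (hmono (f x)).injOn rfl (hφ (by rw [← hτ, ← hτ, hxx'])).symm hxx'
  exact ⟨Equiv.ofBijective τ (Finite.injective_iff_bijective.mp hinj), hτ, hmono⟩

end FiberPerm

theorem exists_eq_mul_of_cocycle {G X M : Type*} [Group G] [CommGroup M]
    (σ : G →* Equiv.Perm X) (h : G → X → M)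
    (hcoc : ∀ a b x, h (a * b) x = h a (σ b x) * h b x)
    (hstab : ∀ a x, σ a x = x → h a x = 1) :
    ∃ ε : X → M, ∀ a x, ε (σ a x) = h a x * ε x := by
  let orbit (x : X) : X → Prop := fun r => ∃ a, σ a r = x
  have orbit_apply : ∀ a x, orbit (σ a x) = orbit x := by
    refine fun a x => funext fun r =>
      propext ⟨fun ⟨b, hb⟩ => ⟨a⁻¹ * b, ?_⟩, fun ⟨b, hb⟩ => ⟨a * b, ?_⟩⟩
    · rw [map_mul, Equiv.Perm.mul_apply, hb, map_inv, Equiv.Perm.inv_eq_iff_eq]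
    · rw [map_mul, Equiv.Perm.mul_apply, hb]
  -- `r x` is a representative of the orbit of `x` that depends only on the orbit
  let r (x : X) : X := @Classical.epsilon X ⟨x⟩ (orbit x)
  have hr : ∀ a x, r (σ a x) = r x := fun a x => by simp only [r, orbit_apply]
  choose w hw using fun x => (Classical.epsilon_spec ⟨x, 1, by simp⟩ : orbit x (r x))
  refine ⟨fun x => h (w x) (r x), fun a x => ?_⟩
  have hfix : σ ((w (σ a x))⁻¹ * (a * w x)) (r x) = r x := by
    rw [map_mul, Equiv.Perm.mul_apply, map_mul, Equiv.Perm.mul_apply, hw, map_inv,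
      Equiv.Perm.inv_eq_iff_eq, ← hr a x, hw]
  calc h (w (σ a x)) (r (σ a x))
      = h (w (σ a x) * ((w (σ a x))⁻¹ * (a * w x))) (r x) := by
        rw [hcoc, hfix, hstab _ _ hfix, mul_one, hr]
    _ = h a x * h (w x) (r x) := by rw [mul_inv_cancel_left, hcoc, hw]

section MonomialMatrix

variable {ι R : Type*} [DecidableEq ι]

def monomialMatrix [Zero R] (σ : Equiv.Perm ι) (c : ι → R) : Matrix ι ι R :=
  Matrix.of fun i j => if i = σ j then c j else 0

@[simp]
theorem monomialMatrix_apply [Zero R] (σ : Equiv.Perm ι) (c : ι → R) (i j : ι) :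
    monomialMatrix σ c i j = if i = σ j then c j else 0 :=
  rfl

theorem monomialMatrix_mul_monomialMatrix [Fintype ι] [NonUnitalNonAssocSemiring R]
    (σ τ : Equiv.Perm ι) (c d : ι → R) :
    monomialMatrix σ c * monomialMatrix τ d = monomialMatrix (σ * τ) fun j => c (τ j) * d j := by
  ext i j
  simp only [Matrix.mul_apply, monomialMatrix_apply, ite_mul, mul_ite, zero_mul, mul_zero,
    Finset.sum_ite_eq', Finset.mem_univ, if_true, Equiv.Perm.mul_apply]
  congr 1

theorem smul_monomialMatrix {S : Type*} [Zero R] [SMulZeroClass S R] (k : S)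
    (σ : Equiv.Perm ι) (c : ι → R) : k • monomialMatrix σ c = monomialMatrix σ (k • c) := by
  ext i j
  simp [smul_ite]

theorem monomialMatrix_one [Zero R] [One R] :
    monomialMatrix (1 : Equiv.Perm ι) (fun _ => (1 : R)) = 1 := by
  ext i j
  simp only [monomialMatrix_apply, Equiv.Perm.one_apply, Matrix.one_apply]
  congr 1

theorem eq_and_eq_of_monomialMatrix_eq [Zero R] {σ τ : Equiv.Perm ι} {c d : ι → R}
    (hc : ∀ j, c j ≠ 0) (h : monomialMatrix σ c = monomialMatrix τ d) : σ = τ ∧ c = d := by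
  have key : ∀ j, c j = if σ j = τ j then d j else 0 := fun j => by
    simpa using congrFun (congrFun h (σ j)) j
  have hστ : ∀ j, σ j = τ j := fun j => by
    by_contra hne
    exact hc j (by simpa [hne] using key j)
  refine ⟨Equiv.ext hστ, funext fun j => ?_⟩
  simpa [hστ] using key j

def monomialUnit [Fintype ι] [Semiring R] (σ : Equiv.Perm ι) (ε : ι → Rˣ) : (Matrix ι ι R)ˣ where
  val := monomialMatrix σ fun j => ε j
  inv := monomialMatrix σ⁻¹ fun j => ↑(ε (σ⁻¹ j))⁻¹
  val_inv := by simp [monomialMatrix_mul_monomialMatrix, ← monomialMatrix_one]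
  inv_val := by simp [monomialMatrix_mul_monomialMatrix, ← monomialMatrix_one]

theorem perm_eq_one_of_isDiag_monomialMatrix [Zero R] {σ : Equiv.Perm ι} {c : ι → R}
    (hc : ∀ j, c j ≠ 0) (h : (monomialMatrix σ c).IsDiag) : σ = 1 :=
  Equiv.ext fun j => by_contra fun hj => hc j (by simpa using h hj)

end MonomialMatrix

theorem projective_cocycle_ratio {X G K : Type*} [Group G] [Field K]
    {σ : G →* Equiv.Perm X} {c : G → X → Kˣ}
    (hc : ∀ a b, ∃ z : Kˣ, ∀ x, c a (σ b x) * c b x = z * c (a * b) x)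
    {τ : Equiv.Perm X} (hτ : ∀ a x, σ a (τ x) = τ (σ a x)) (γ : G →* Kˣ) (a b : G) (x : X) :
    c (a * b) (τ x) * (γ (a * b) * c (a * b) x)⁻¹ =
      c a (τ (σ b x)) * (γ a * c a (σ b x))⁻¹ * (c b (τ x) * (γ b * c b x)⁻¹) := by
  obtain ⟨z, hz⟩ := hc a b
  have e1 := congrArg Units.val (hz (τ x))
  have e2 := congrArg Units.val (hz x)
  rw [hτ] at e1
  apply Units.ext
  push_cast at e1 e2 ⊢
  field_simp
  rw [map_mul, Units.val_mul]
  linear_combination (c (a * b) (τ x) * γ a * γ b : K) * e2 - (γ a * γ b * c (a * b) x : K) * e1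

theorem exists_monomialUnit_intertwining {X G C K : Type*} [LinearOrder X] [Fintype X]
    [Group G] [CommGroup C] [Field K]
    (σ : G →* Equiv.Perm X) (c : G → X → Kˣ)
    (hc : ∀ a b, ∃ z : Kˣ, ∀ x, c a (σ b x) * c b x = z * c (a * b) x)
    (D : X → C) (μ : G → C) (hD : ∀ a x, D (σ a x) = D x * μ a)
    (hmono : ∀ a y, StrictMonoOn (σ a) (D ⁻¹' {y}))
    (γ : G →* Kˣ) (g : C)
    (hker : ∀ a, μ a = 1 → ∀ x x', D x' = D x * g → c a x' = γ a * c a x)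
    (hcard : ∀ x, Nat.card {x' // D x' = D x * g} = Nat.card {x' // D x' = D x}) :
    ∃ A : (Matrix X X K)ˣ, ∀ a, monomialMatrix (σ a) (fun x => (c a x : K)) * A =
      (γ a : K) • (A * monomialMatrix (σ a) (fun x => (c a x : K))) := by
  obtain ⟨τ, hτD, hτmono⟩ := exists_perm_map_fiber_strictMonoOn (mul_left_injective g) hcard
  have hcomm : ∀ a, σ a * τ = τ * σ a := fun a =>
    Equiv.Perm.eq_of_map_fiber_of_strictMonoOn (f := D) (φ := fun y => y * g * μ a)
      (mul_left_injective _ |>.comp (mul_left_injective g))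
      (fun x => by simp [hD, hτD]) (fun x => by simp [hD, hτD, mul_right_comm])
      (fun y => (hmono a _).comp (hτmono y) (Equiv.Perm.mapsTo_fiber (φ := (· * g)) hτD y))
      (fun y => (hτmono _).comp (hmono a y)
        (Equiv.Perm.mapsTo_fiber (φ := (· * μ a)) (hD a) y))
  obtain ⟨ε, hε⟩ := exists_eq_mul_of_cocycle σ (fun a x => c a (τ x) * (γ a * c a x)⁻¹)
    (projective_cocycle_ratio hc (fun a x => by rw [← Equiv.Perm.mul_apply, hcomm]; rfl) γ)
    (fun a x hx => by
      have hμ : μ a = 1 := mul_eq_left.mp (by rw [← hD, hx])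
      rw [hker a hμ x (τ x) (hτD x), mul_inv_cancel])
  refine ⟨monomialUnit τ ε, fun a => ?_⟩
  simp only [monomialUnit, monomialMatrix_mul_monomialMatrix, smul_monomialMatrix, hcomm a]
  congr 1
  funext x
  rw [Pi.smul_apply, hε, smul_eq_mul]
  push_cast
  field_simp

namespace Units

variable {K R : Type*} [CommSemiring K] [Semiring R] [Algebra K R]

theorem val_eq_smul_of_inv_mul {U V : Rˣ} {k : K} (h : ((U⁻¹ * V : Rˣ) : R) = k • 1) :
    (V : R) = k • (U : R) := by
  rw [← _root_.mul_inv_cancel_left U V, val_mul, h, mul_smul_one]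

theorem val_eq_smul_of_mul_inv {U V : Rˣ} {k : K} (h : ((V * U⁻¹ : Rˣ) : R) = k • 1) :
    (V : R) = k • (U : R) := by
  rw [← _root_.inv_mul_cancel_right V U, val_mul, h, smul_one_mul]

theorem conj_commutator_eq_smul_one_iff (A S : Rˣ) (k : K) :
    ((A⁻¹ * S * A * S⁻¹ : Rˣ) : R) = k • 1 ↔ (S * A : R) = k • (A * S : R) := by
  have hconj : ((A⁻¹ * S * A * S⁻¹ : Rˣ) : R) = ↑A⁻¹ * (S * A) * ↑S⁻¹ := by
    simp only [val_mul, mul_assoc]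
  constructor
  · intro h
    calc (S * A : R) = A * ↑(A⁻¹ * S * A * S⁻¹) * S := by simp [mul_assoc]
      _ = k • (A * S : R) := by rw [h, mul_smul_one, smul_mul_assoc]
  · intro h
    rw [hconj, h, mul_smul_comm, smul_mul_assoc]
    simp

theorem mul_inv_eq_smul_inv_mul {A S : Rˣ} {k : Kˣ} (h : (S * A : R) = (k : K) • (A * S : R)) :
    (S * ↑A⁻¹ : R) = ((k⁻¹ : Kˣ) : K) • (↑A⁻¹ * S : R) := by
  have h' : (↑A⁻¹ * S : R) = (k : K) • (S * ↑A⁻¹ : R) := by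
    calc (↑A⁻¹ * S : R) = ↑A⁻¹ * (S * A) * ↑A⁻¹ := by simp [mul_assoc]
      _ = (k : K) • (S * ↑A⁻¹ : R) := by rw [h, mul_smul_comm, smul_mul_assoc]; simp
  rw [h', smul_smul, Units.inv_mul, one_smul]

end Units

section WeightSpace

variable {Λ : Type*} [CommGroup Λ] {n : ℕ} {Δ : Subgroup Λ}
  {s : Λ → (Matrix (Fin n) (Fin n) ℂ)ˣ}

theorem mem_weightSpace_iff {χ : Δ →* ℂˣ} {v : Fin n → ℂ} :
    v ∈ weightSpace Δ s χ ↔ ∀ d : Δ, (s d : Matrix (Fin n) (Fin n) ℂ) *ᵥ v = (χ d : ℂ) • v := by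
  simp [weightSpace]

theorem mulVec_mem_weightSpace_mul {A : Matrix (Fin n) (Fin n) ℂ} {ψ : Δ →* ℂˣ}
    (hA : ∀ d : Δ, (s d : Matrix (Fin n) (Fin n) ℂ) * A = (ψ d : ℂ) • (A * s d))
    {χ : Δ →* ℂˣ} {v : Fin n → ℂ} (hv : v ∈ weightSpace Δ s χ) :
    A *ᵥ v ∈ weightSpace Δ s (χ * ψ) := by
  rw [mem_weightSpace_iff] at hv ⊢
  intro d
  rw [Matrix.mulVec_mulVec, hA, Matrix.smul_mulVec, ← Matrix.mulVec_mulVec, hv,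
    Matrix.mulVec_smul, smul_smul, MonoidHom.mul_apply, Units.val_mul, mul_comm]

theorem finrank_weightSpace_le_mul {A : (Matrix (Fin n) (Fin n) ℂ)ˣ} {ψ : Δ →* ℂˣ}
    (hA : ∀ d : Δ, (s d : Matrix (Fin n) (Fin n) ℂ) * A = (ψ d : ℂ) • (A * s d))
    (χ : Δ →* ℂˣ) :
    Module.finrank ℂ (weightSpace Δ s χ) ≤ Module.finrank ℂ (weightSpace Δ s (χ * ψ)) :=
  LinearMap.finrank_le_finrank_of_injective (f := (A : Matrix (Fin n) (Fin n) ℂ).mulVecLin.restrict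
    fun _ => mulVec_mem_weightSpace_mul hA)
    fun _ _ h => Subtype.ext (Matrix.mulVec_injective_of_isUnit A.isUnit (congrArg Subtype.val h))

theorem weightSpace_eq_iInf_ker_proj (hdiag : ∀ d ∈ Δ, (s d : Matrix (Fin n) (Fin n) ℂ).IsDiag)
    (χ : Δ →* ℂˣ) :
    weightSpace Δ s χ = ⨅ i ∈ {i | ∀ d : Δ, (s d : Matrix (Fin n) (Fin n) ℂ) i i = χ d}ᶜ,
      LinearMap.ker (LinearMap.proj i : ((Fin n) → ℂ) →ₗ[ℂ] ℂ) := by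
  have hmulVec : ∀ (d : Δ) v i, (s d *ᵥ v) i = (s d : Matrix (Fin n) (Fin n) ℂ) i i * v i :=
    fun d v i => by
      conv_lhs => rw [← (hdiag d d.2).diagonal_diag, mulVec_diagonal, Matrix.diag_apply]
  ext v
  simp only [mem_weightSpace_iff, funext_iff, hmulVec, Pi.smul_apply, smul_eq_mul,
    mul_eq_mul_right_iff, Submodule.mem_iInf, LinearMap.mem_ker, LinearMap.proj_apply,
    Set.mem_compl_iff, Set.mem_ofPred_eq, not_forall]
  exact ⟨fun h i ⟨d, hd⟩ => (h d i).resolve_left hd,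
    fun h d i => or_iff_not_imp_left.mpr fun hd => h i ⟨d, hd⟩⟩

theorem finrank_weightSpace_of_isDiag (hdiag : ∀ d ∈ Δ, (s d : Matrix (Fin n) (Fin n) ℂ).IsDiag)
    (χ : Δ →* ℂˣ) :
    Module.finrank ℂ (weightSpace Δ s χ) =
      Nat.card {i // ∀ d : Δ, (s d : Matrix (Fin n) (Fin n) ℂ) i i = χ d} := by
  classical
  rw [weightSpace_eq_iInf_ker_proj hdiag, (LinearMap.iInfKerProjEquiv ℂ (fun _ => ℂ)
    disjoint_compl_right (by simp)).finrank_eq, Module.finrank_pi, Nat.card_eq_fintype_card]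
  rfl

theorem finrank_weightSpace_mul_eq {A : (Matrix (Fin n) (Fin n) ℂ)ˣ} {ψ : Δ →* ℂˣ}
    (hA : ∀ d : Δ, (s d : Matrix (Fin n) (Fin n) ℂ) * A = (ψ d : ℂ) • (A * s d))
    (χ : Δ →* ℂˣ) :
    Module.finrank ℂ (weightSpace Δ s (χ * ψ)) = Module.finrank ℂ (weightSpace Δ s χ) := by
  refine le_antisymm ?_ (finrank_weightSpace_le_mul hA χ)
  have := finrank_weightSpace_le_mul (A := A⁻¹) (ψ := ψ⁻¹)
    (fun d => by simpa using Units.mul_inv_eq_smul_inv_mul (hA d)) (χ * ψ)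
  rwa [show χ * ψ * ψ⁻¹ = χ by ext; simp] at this

theorem finrank_weightSpace_eq_card (hdiag : ∀ d ∈ Δ, (s d : Matrix (Fin n) (Fin n) ℂ).IsDiag)
    {D : Fin n → Δ →* ℂˣ} (hD : ∀ x (d : Δ), (D x d : ℂ) = (s d : Matrix (Fin n) (Fin n) ℂ) x x)
    (χ : Δ →* ℂˣ) :
    Module.finrank ℂ (weightSpace Δ s χ) = Nat.card {x // D x = χ} := by
  rw [finrank_weightSpace_of_isDiag hdiag]
  exact Nat.card_congr (Equiv.subtypeEquivRight fun x => by
    simp only [DFunLike.ext_iff, Units.ext_iff, hD])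

theorem card_weight_fiber_mul_eq
    (hdiag : ∀ d ∈ Δ, (s d : Matrix (Fin n) (Fin n) ℂ).IsDiag)
    {D : Fin n → Δ →* ℂˣ} (hD : ∀ x (d : Δ), (D x d : ℂ) = (s d : Matrix (Fin n) (Fin n) ℂ) x x)
    {ψ : Δ →* ℂˣ} (hψ : ∀ χ, weightSpace Δ s χ ≠ ⊥ →
      Module.finrank ℂ (weightSpace Δ s (χ * ψ)) = Module.finrank ℂ (weightSpace Δ s χ))
    (x : Fin n) : Nat.card {x' // D x' = D x * ψ} = Nat.card {x' // D x' = D x} := by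
  have hne : weightSpace Δ s (D x) ≠ ⊥ := by
    rw [Ne, ← Submodule.finrank_eq_zero, finrank_weightSpace_eq_card hdiag hD]
    have : Nonempty {x' // D x' = D x} := ⟨⟨x, rfl⟩⟩
    exact Nat.card_pos.ne'
  rw [← finrank_weightSpace_eq_card hdiag hD, ← finrank_weightSpace_eq_card hdiag hD]
  exact hψ (D x) hne

theorem strictMonoOn_weight_fiber
    {D : Fin n → Δ →* ℂˣ} (hD : ∀ x (d : Δ), (D x d : ℂ) = (s d : Matrix (Fin n) (Fin n) ℂ) x x)
    {ρ : Equiv.Perm (Fin n)} (hρ : ∀ j j', (∀ d ∈ Δ, (s d : Matrix (Fin n) (Fin n) ℂ) j j =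
      (s d : Matrix (Fin n) (Fin n) ℂ) j' j') → j ≤ j' → ρ j ≤ ρ j') (y : Δ →* ℂˣ) :
    StrictMonoOn ρ (D ⁻¹' {y}) :=
  MonotoneOn.strictMonoOn_of_injOn (fun j (hj : D j = y) j' (hj' : D j' = y) hle =>
    hρ j j' (fun d hd => by rw [← hD j ⟨d, hd⟩, ← hD j' ⟨d, hd⟩, hj, hj']) hle) ρ.injective.injOn

end WeightSpace

section Pairing

variable {Λ : Type*} [CommGroup Λ] {l : Λ →* (Λ →* ℂˣ)}

theorem IsAntisymPairing.apply_swap (hl : IsAntisymPairing l) (x y : Λ) : l y x = (l x y)⁻¹ := by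
  have h := hl (x * y)
  simp only [map_mul, MonoidHom.mul_apply, hl x, hl y, one_mul, mul_one] at h
  exact eq_inv_of_mul_eq_one_left h

theorem IsMaxIsotropic.mem_of_forall_apply_eq_one (hl : IsAntisymPairing l) {Δ : Subgroup Λ}
    (hΔ : IsMaxIsotropic l Δ) {a : Λ} (ha : ∀ d ∈ Δ, l d a = 1) : a ∈ Δ := by
  have hiso : IsIsotropic l (Δ ⊔ Subgroup.zpowers a) := by
    rintro _ hx _ hy
    obtain ⟨d, hd, _, ⟨k, rfl⟩, rfl⟩ := Subgroup.mem_sup.mp hx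
    obtain ⟨d', hd', _, ⟨m, rfl⟩, rfl⟩ := Subgroup.mem_sup.mp hy
    simp [map_zpow, hΔ.1 d hd d' hd', ha d hd, hl.apply_swap d' a, ha d' hd', hl a]
  rw [← hΔ.2 _ hiso le_sup_left]
  exact Subgroup.mem_sup_right (Subgroup.mem_zpowers a)

end Pairing

section MonomialFamily

variable {Λ : Type*} [CommGroup Λ] {n : ℕ} {s : Λ → (Matrix (Fin n) (Fin n) ℂ)ˣ}
  {σ : Λ → Equiv.Perm (Fin n)} {c : Λ → Fin n → ℂˣ}

theorem IsBlockScalarPerm.exists_monomialMatrix {R : Fin n → Fin n → Prop}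
    {M : Matrix (Fin n) (Fin n) ℂ} (h : IsBlockScalarPerm R M) :
    ∃ σ : Equiv.Perm (Fin n), ∃ c : Fin n → ℂˣ, M = monomialMatrix σ (fun j => (c j : ℂ)) ∧
      ∀ j j', R j j' → j ≤ j' → σ j ≤ σ j' := by
  obtain ⟨σ, hzero, hne, -, -, hmono⟩ := h
  refine ⟨σ, fun j => Units.mk0 _ (hne j), ?_, hmono⟩
  ext i j
  rw [monomialMatrix_apply]
  split_ifs with hij
  · rw [hij, Units.val_mk0]
  · exact hzero i j hij

theorem perm_mul_and_exists_cocycle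
    (hs : ∀ a, (s a : Matrix (Fin n) (Fin n) ℂ) = monomialMatrix (σ a) (fun j => (c a j : ℂ)))
    (hscal : ∀ a b : Λ, ∃ z : ℂˣ,
      (((s (a * b))⁻¹ * s a * s b : (Matrix (Fin n) (Fin n) ℂ)ˣ) :
        Matrix (Fin n) (Fin n) ℂ) = (z : ℂ) • 1) (a b : Λ) :
    σ (a * b) = σ a * σ b ∧ ∃ z : ℂˣ, ∀ j, c a (σ b j) * c b j = z * c (a * b) j := by
  obtain ⟨z, hz⟩ := hscal a b
  have h := Units.val_eq_smul_of_inv_mul (by rwa [← mul_assoc])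
  rw [Units.val_mul, hs, hs, hs, monomialMatrix_mul_monomialMatrix, smul_monomialMatrix] at h
  obtain ⟨hσ, hc⟩ := eq_and_eq_of_monomialMatrix_eq (fun j => by simp) h
  exact ⟨hσ.symm, z, fun j => Units.ext (by simpa using congrFun hc j)⟩

theorem exists_weights {Δ : Subgroup Λ}
    (hs : ∀ a, (s a : Matrix (Fin n) (Fin n) ℂ) = monomialMatrix (σ a) (fun j => (c a j : ℂ)))
    (hhom : ∀ d ∈ Δ, ∀ d' ∈ Δ, s (d * d') = s d * s d') (hσ : ∀ d ∈ Δ, σ d = 1) :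
    ∃ D : Fin n → Δ →* ℂˣ, ∀ x (d : Δ), D x d = c d x := by
  refine ⟨fun x => MonoidHom.mk' (fun d : Δ => c d x) fun d d' => ?_, fun _ _ => rfl⟩
  have h := congrArg Units.val (hhom d d.2 d' d'.2)
  rw [Units.val_mul, hs, hs, hs, monomialMatrix_mul_monomialMatrix, hσ d' d'.2] at h
  have := (eq_and_eq_of_monomialMatrix_eq (fun j => by simp) h).2
  exact Units.ext (by simpa using congrFun this x)

theorem weight_perm_apply {Δ : Subgroup Λ} {l : Λ →* (Λ →* ℂˣ)}
    (hs : ∀ a, (s a : Matrix (Fin n) (Fin n) ℂ) = monomialMatrix (σ a) (fun j => (c a j : ℂ)))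
    (hcomm : ∀ a b : Λ,
      ((s a * s b * (s a)⁻¹ * (s b)⁻¹ : (Matrix (Fin n) (Fin n) ℂ)ˣ) :
        Matrix (Fin n) (Fin n) ℂ) = ((l a b : ℂˣ) : ℂ) • 1)
    (hσ : ∀ d ∈ Δ, σ d = 1) {D : Fin n → Δ →* ℂˣ} (hD : ∀ x (d : Δ), D x d = c d x)
    (a : Λ) (x : Fin n) : D (σ a x) = D x * (l.flip a).comp Δ.subtype := by
  ext d
  have hcomm' : s d * s a * (s a * s d)⁻¹ = s d * s a * (s d)⁻¹ * (s a)⁻¹ := by group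
  have h := Units.val_eq_smul_of_mul_inv (hcomm' ▸ hcomm d a)
  rw [Units.val_mul, Units.val_mul, hs, hs, monomialMatrix_mul_monomialMatrix,
    monomialMatrix_mul_monomialMatrix, smul_monomialMatrix, hσ d d.2, mul_one, one_mul] at h
  have := congrFun (eq_and_eq_of_monomialMatrix_eq (fun j => by simp) h).2 x
  simp only [Equiv.Perm.one_apply, Pi.smul_apply, smul_eq_mul] at this
  rw [hD, MonoidHom.mul_apply, Units.val_mul, hD]
  simp only [MonoidHom.comp_apply, Subgroup.subtype_apply, MonoidHom.flip_apply]
  exact mul_right_cancel₀ (c a x).ne_zero (by rw [this]; ring)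

theorem entry_eq_mul_of_weight_eq_mul {Δ : Subgroup Λ} {l : Λ →* (Λ →* ℂˣ)}
    (hl : IsAntisymPairing l) (hΔ : IsMaxIsotropic l Δ) {D : Fin n → Δ →* ℂˣ}
    (hD : ∀ x (d : Δ), D x d = c d x) {γ : Λ →* ℂˣ} {a : Λ}
    (ha : (l.flip a).comp Δ.subtype = 1) {x x' : Fin n} (hx' : D x' = D x * γ.comp Δ.subtype) :
    c a x' = γ a * c a x := by
  have haΔ : a ∈ Δ := hΔ.mem_of_forall_apply_eq_one hl fun d hd => by
    simpa using DFunLike.congr_fun ha ⟨d, hd⟩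
  rw [← hD x' ⟨a, haΔ⟩, hx', MonoidHom.mul_apply, hD, mul_comm]
  rfl

end MonomialFamily

theorem stmt_9_general {Λ : Type*} [CommGroup Λ] {n : ℕ}
    (l : Λ →* (Λ →* ℂˣ)) (hl : IsAntisymPairing l)
    (Δ : Subgroup Λ) (hΔ : IsMaxIsotropic l Δ)
    (s : Λ → (Matrix (Fin n) (Fin n) ℂ)ˣ)
    (hscal : ∀ a b : Λ, ∃ z : ℂˣ,
      (((s (a * b))⁻¹ * s a * s b : (Matrix (Fin n) (Fin n) ℂ)ˣ) :
        Matrix (Fin n) (Fin n) ℂ) = (z : ℂ) • 1)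
    (hcomm : ∀ a b : Λ,
      ((s a * s b * (s a)⁻¹ * (s b)⁻¹ : (Matrix (Fin n) (Fin n) ℂ)ˣ) :
        Matrix (Fin n) (Fin n) ℂ) = ((l a b : ℂˣ) : ℂ) • 1)
    (hhom : ∀ d ∈ Δ, ∀ d' ∈ Δ, s (d * d') = s d * s d')
    (hdiag : ∀ d ∈ Δ, ((s d : Matrix (Fin n) (Fin n) ℂ)).IsDiag)
    (hblock : ∀ a : Λ, IsBlockScalarPerm
      (fun i j => ∀ d ∈ Δ, (s d : Matrix (Fin n) (Fin n) ℂ) i i =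
        (s d : Matrix (Fin n) (Fin n) ℂ) j j)
      (s a : Matrix (Fin n) (Fin n) ℂ)) :
    ∀ γ : Λ →* ℂˣ,
      (∃ A : (Matrix (Fin n) (Fin n) ℂ)ˣ, ∀ a : Λ,
        ((A⁻¹ * s a * A * (s a)⁻¹ : (Matrix (Fin n) (Fin n) ℂ)ˣ) :
          Matrix (Fin n) (Fin n) ℂ) = ((γ a : ℂˣ) : ℂ) • 1) ↔
      (∀ χ : Δ →* ℂˣ, weightSpace Δ s χ ≠ ⊥ →
        (weightSpace Δ s (χ * γ.comp Δ.subtype) ≠ ⊥ ∧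
          Module.finrank ℂ (weightSpace Δ s (χ * γ.comp Δ.subtype)) =
            Module.finrank ℂ (weightSpace Δ s χ))) := by
  intro γ
  constructor
  · rintro ⟨A, hA⟩ χ hχ
    have heq := finrank_weightSpace_mul_eq (ψ := γ.comp Δ.subtype)
      (fun d => (Units.conj_commutator_eq_smul_one_iff _ _ _).mp (hA d)) χ
    refine ⟨fun hbot => hχ ?_, heq⟩
    rw [← Submodule.finrank_eq_zero, ← heq, hbot, finrank_bot]
  · intro hRHS
    choose σ₀ c hs hσmono using fun a => (hblock a).exists_monomialMatrix
    have hmul := perm_mul_and_exists_cocycle hs hscal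
    obtain ⟨σ, rfl⟩ : ∃ σ : Λ →* Equiv.Perm (Fin n), ⇑σ = σ₀ :=
      ⟨MonoidHom.mk' σ₀ fun a b => (hmul a b).1, rfl⟩
    have hσΔ : ∀ d ∈ Δ, σ d = 1 := fun d hd =>
      perm_eq_one_of_isDiag_monomialMatrix (fun j => (c d j).ne_zero) (hs d ▸ hdiag d hd)
    obtain ⟨D, hD⟩ := exists_weights hs hhom hσΔ
    have hDs : ∀ x (d : Δ), (D x d : ℂ) = (s d : Matrix (Fin n) (Fin n) ℂ) x x := fun x d => by
      simp [hD, hs, hσΔ d d.2]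
    obtain ⟨A, hA⟩ := exists_monomialUnit_intertwining σ c (fun a b => (hmul a b).2) D
      (fun a => (l.flip a).comp Δ.subtype) (weight_perm_apply hs hcomm hσΔ hD)
      (fun a => strictMonoOn_weight_fiber hDs (hσmono a)) γ (γ.comp Δ.subtype)
      (fun _ ha _ _ => entry_eq_mul_of_weight_eq_mul hl hΔ hD ha)
      (card_weight_fiber_mul_eq hdiag hDs fun χ hχ => (hRHS χ hχ).2)
    exact ⟨A, fun a => (Units.conj_commutator_eq_smul_one_iff _ _ _).mpr (by rw [hs]; exact hA a)⟩

/-- Let `(l, Δ, s)` be a representative triple for a finite commutative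
group `Λ` acting on `GL(n,ℂ)`.  Then a character `γ : Λ → ℂˣ` lies in the image of
`c_θ : GL(n,ℂ)_θ → Hom(Λ,ℂˣ)`, `c_θ(A)(a)•1 = A⁻¹ s(a) A s(a)⁻¹`, if and only if for every
weight `χ` of `{s(δ)}_{δ∈Δ}` the character `χ·(γ|_Δ)` is again a weight with weight space of
the same dimension. -/
theorem stmt_9 {Λ : Type*} [CommGroup Λ] [Finite Λ] {n : ℕ} (hn : 1 ≤ n)
    (l : Λ →* (Λ →* ℂˣ)) (hl : IsAntisymPairing l)
    (Δ : Subgroup Λ) (hΔ : IsMaxIsotropic l Δ)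
    (s : Λ → (Matrix (Fin n) (Fin n) ℂ)ˣ)
    (h1 : s 1 = 1)
    (hscal : ∀ a b : Λ, ∃ z : ℂˣ,
      (((s (a * b))⁻¹ * s a * s b : (Matrix (Fin n) (Fin n) ℂ)ˣ) :
        Matrix (Fin n) (Fin n) ℂ) = (z : ℂ) • 1)
    (hcomm : ∀ a b : Λ,
      ((s a * s b * (s a)⁻¹ * (s b)⁻¹ : (Matrix (Fin n) (Fin n) ℂ)ˣ) :
        Matrix (Fin n) (Fin n) ℂ) = ((l a b : ℂˣ) : ℂ) • 1)
    (hhom : ∀ d ∈ Δ, ∀ d' ∈ Δ, s (d * d') = s d * s d')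
    (hdiag : ∀ d ∈ Δ, ((s d : Matrix (Fin n) (Fin n) ℂ)).IsDiag)
    (hblock : ∀ a : Λ, IsBlockScalarPerm
      (fun i j => ∀ d ∈ Δ, (s d : Matrix (Fin n) (Fin n) ℂ) i i =
        (s d : Matrix (Fin n) (Fin n) ℂ) j j)
      (s a : Matrix (Fin n) (Fin n) ℂ)) :
    ∀ γ : Λ →* ℂˣ,
      (∃ A : (Matrix (Fin n) (Fin n) ℂ)ˣ, ∀ a : Λ,
        ((A⁻¹ * s a * A * (s a)⁻¹ : (Matrix (Fin n) (Fin n) ℂ)ˣ) :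
          Matrix (Fin n) (Fin n) ℂ) = ((γ a : ℂˣ) : ℂ) • 1) ↔
      (∀ χ : Δ →* ℂˣ, weightSpace Δ s χ ≠ ⊥ →
        (weightSpace Δ s (χ * γ.comp Δ.subtype) ≠ ⊥ ∧
          Module.finrank ℂ (weightSpace Δ s (χ * γ.comp Δ.subtype)) =
            Module.finrank ℂ (weightSpace Δ s χ))) :=
  stmt_9_general l hl Δ hΔ s hscal hcomm hhom hdiag hblock
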